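/- Let S∞(ℚ) be the group of all permutations of ℚ, equipped with the topology of pointwise convergence, and let H = Aut(ℚ,<) = {σ ∈ S∞(ℚ) | σ is strictly increasing for the usual order on ℚ}. Then H, with the subspace topology, is extremely amenable, and H is maximally extremely amenable in S∞(ℚ): for every subgroup H' of S∞(ℚ) with H ⊆ H' such that H', with the subspace topology, is extremely amenable, one has H' = H. -/

import Mathlib

/-- A topological group `G` is *extremely amenable* if every continuous action of `G`
on a nonempty compact Hausdorff space has a `G`-fixed point. -/
def ExtremelyAmenable (G : Type) [Group G] [TopologicalSpace G] : Prop :=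
  ∀ (X : Type) [TopologicalSpace X] [CompactSpace X] [T2Space X] [Nonempty X]
    [MulAction G X] [ContinuousSMul G X], ∃ x : X, ∀ g : G, g • x = x

/-- The pair `(G, H)` is *relatively extremely amenable* if every continuous action of `G`
on a nonempty compact Hausdorff space has a point fixed by every element of `H`. -/
def RelativelyExtremelyAmenable (G : Type) [Group G] [TopologicalSpace G] (H : Subgroup G) :
    Prop :=
  ∀ (X : Type) [TopologicalSpace X] [CompactSpace X] [T2Space X] [Nonempty X]
    [MulAction G X] [ContinuousSMul G X], ∃ x : X, ∀ h ∈ H, h • x = x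
/-- The topology of pointwise convergence on the permutation group of a set `α`
(`α` being given the discrete topology): the topology induced by the embedding
`σ ↦ (σ, σ⁻¹)` into `(α → α) × (α → α)`. -/
def permPointwiseTopology (α : Type) : TopologicalSpace (Equiv.Perm α) :=
  letI : TopologicalSpace α := ⊥
  TopologicalSpace.induced
    (fun σ : Equiv.Perm α => ((⇑σ, ⇑σ.symm) : (α → α) × (α → α))) inferInstance

/-- The subgroup of the permutation group of a linear order `α` consisting of the
permutations that are strictly increasing. -/
def strictMonoPerms (α : Type) [LinearOrder α] : Subgroup (Equiv.Perm α) where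
  carrier := {σ : Equiv.Perm α | StrictMono ⇑σ}
  one_mem' := fun _ _ h => h
  mul_mem' := fun ha hb _ _ h => ha (hb h)
  inv_mem' := by
    intro a ha x y hxy
    have h := ha.lt_iff_lt (a := a⁻¹ x) (b := a⁻¹ y)
    rw [Equiv.Perm.coe_inv, Equiv.apply_symm_apply, Equiv.apply_symm_apply] at h
    exact h.mp hxy

noncomputable instance : TopologicalSpace (Equiv.Perm ℚ) := permPointwiseTopology ℚ

/-! Extreme amenability is the Kechris–Pestov–Todorcevic argument. Let `Aut(ℚ)` act
continuously on a compact space `X`, and fix an entourage `W`, a finite `F ⊆ Aut(ℚ)` and `x₀ : X`.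
By compactness there is a finite `A ⊆ ℚ` whose pointwise stabiliser moves every point
`W`-little, so `h⁻¹ • x₀` depends, up to `W`, only on the set `h(A)`. Colour the `|A|`-subsets
of `ℚ` by a nearby point of a finite `W`-net of `X`. By Ramsey's theorem and the homogeneity of
`ℚ` there is `φ` for which the sets `φ(g⁻¹(A))`, `g ∈ F`, and `φ(A)` all get one colour, so each
`g ∈ F` moves `φ⁻¹ • x₀` only a little. A compactness argument turns these approximate fixed
points into a fixed point.

For maximality, an extremely amenable `H ⊇ Aut(ℚ)` fixes a point of the compact space of
linear orders on `ℚ`. This order is `Aut(ℚ)`-invariant, so it compares all pairs `a < b` in the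
same way. An element of `H` that reverses a pair would then make it compare `(x, y)` and
`(y, x)` in the same way. -/

open Set Filter Topology Uniformity Equiv
open scoped SetRel

section Ramsey

variable {α κ : Type}

def IsHomogeneous (c : Finset α → κ) (n : ℕ) (T : Set α) : Prop :=
  ∃ k, ∀ t : Finset α, ↑t ⊆ T → t.card = n → c t = k

theorem exists_strictMono_forall_insert_color_eq (n : ℕ) (c : Finset ℕ → κ)
    (ih : ∀ S : Set ℕ, S.Infinite → ∀ c' : Finset ℕ → κ, ∃ T ⊆ S, T.Infinite ∧ IsHomogeneous c' n T)
    {S : Set ℕ} (hS : S.Infinite) :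
    ∃ a : ℕ → ℕ, StrictMono a ∧ range a ⊆ S ∧ ∃ k : ℕ → κ, ∀ i, ∀ t : Finset ℕ,
      ↑t ⊆ a '' Ioi i → t.card = n → c (insert (a i) t) = k i := by
  have step (S : {S : Set ℕ // S.Infinite}) : ∃ a ∈ S.1, ∃ T : {T : Set ℕ // T.Infinite},
      T.1 ⊆ S.1 ∧ (∀ x ∈ T.1, a < x) ∧ IsHomogeneous (fun t => c (insert a t)) n T.1 := by
    obtain ⟨a, ha⟩ := S.2.nonempty
    obtain ⟨T, hTS, hT, hhom⟩ := ih _ (S.2.sdiff (finite_Iic a)) fun t => c (insert a t)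
    exact ⟨a, ha, ⟨T, hT⟩, fun x hx => (hTS hx).1, fun x hx => not_le.1 (hTS hx).2, hhom⟩
  choose a ha T hTS haT k hk using step
  let f : ℕ → {S : Set ℕ // S.Infinite} := fun i => Nat.rec ⟨S, hS⟩ (fun _ => T) i
  have hf : Antitone fun i => (f i).1 := antitone_nat_of_succ_le fun i => hTS (f i)
  refine ⟨fun i => a (f i), fun i j hij => haT _ _ (hf hij (ha (f j))), ?_, fun i => k (f i),
    fun i t ht => hk (f i) t (ht.trans ?_)⟩
  · rintro _ ⟨i, rfl⟩
    exact hf (Nat.zero_le i) (ha (f i))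
  · rintro _ ⟨j, hij, rfl⟩
    exact hf hij (ha (f j))

theorem exists_infinite_isHomogeneous [Finite κ] (c : Finset ℕ → κ) (n : ℕ) {S : Set ℕ}
    (hS : S.Infinite) : ∃ T ⊆ S, T.Infinite ∧ IsHomogeneous c n T := by
  induction n generalizing c S with
  | zero => exact ⟨S, subset_rfl, hS, c ∅, fun t _ ht => by rw [Finset.card_eq_zero.1 ht]⟩
  | succ n ih =>
    obtain ⟨a, ha, haS, k, hk⟩ :=
      exists_strictMono_forall_insert_color_eq n c (fun S hS c' => ih c' hS) hS
    obtain ⟨k₀, hk₀⟩ := Finite.exists_infinite_fiber k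
    refine ⟨a '' (k ⁻¹' {k₀}), (image_subset_range _ _).trans haS,
      (infinite_coe_iff.1 hk₀).image ha.injective.injOn, k₀, fun t ht hcard => ?_⟩
    have hne : t.Nonempty := Finset.card_pos.1 (by omega)
    obtain ⟨i, hi, hai⟩ := ht (t.min'_mem hne)
    have hait : a i ∈ t := hai ▸ t.min'_mem hne
    have hrest : ↑(t.erase (a i)) ⊆ a '' Ioi i := by
      intro x hx
      obtain ⟨hxne, hxt⟩ := Finset.mem_erase.1 hx
      obtain ⟨j, -, rfl⟩ := ht hxt
      exact ⟨j, ha.lt_iff_lt.1 ((hai ▸ t.min'_le _ hxt).lt_of_ne' hxne), rfl⟩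
    rw [← Finset.insert_erase hait,
      hk i _ hrest (by rw [Finset.card_erase_of_mem hait]; omega)]
    exact hi

theorem exists_finset_card_eq_isHomogeneous [Infinite α] [Finite κ] (c : Finset α → κ)
    (n N : ℕ) : ∃ C : Finset α, C.card = N ∧ IsHomogeneous c n C := by
  let e := Infinite.natEmbedding α
  obtain ⟨T, -, hT, k, hk⟩ := exists_infinite_isHomogeneous (fun s => c (s.map e)) n infinite_univ
  obtain ⟨C, hCT, rfl⟩ := hT.exists_subset_card_eq N
  refine ⟨C.map e, Finset.card_map _, k, fun t ht hcard => ?_⟩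
  obtain ⟨u, huC, rfl⟩ := Finset.subset_map_iff.1 (Finset.coe_subset.1 ht)
  exact hk u ((Finset.coe_subset.2 huC).trans hCT) (by simpa using hcard)

end Ramsey

section Homogeneity

open Order Order.PartialIso

variable {α β : Type} [LinearOrder α] [LinearOrder β]

theorem Order.exists_orderIso_apply_eq [Countable α] [DenselyOrdered α] [NoMinOrder α]
    [NoMaxOrder α] [Nonempty α] [Countable β] [DenselyOrdered β] [NoMinOrder β] [NoMaxOrder β]
    [Nonempty β] {ι : Type} [LinearOrder ι] [Fintype ι] {f : ι → α} {g : ι → β}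
    (hf : StrictMono f) (hg : StrictMono g) : ∃ e : α ≃o β, ∀ i, e (f i) = g i := by
  cases nonempty_encodable α
  cases nonempty_encodable β
  classical
  let f₀ : PartialIso α β := ⟨Finset.univ.image fun i => (f i, g i), by
    simp only [Finset.mem_image, Finset.mem_univ, true_and]
    rintro _ ⟨i, rfl⟩ _ ⟨j, rfl⟩
    exact (hf.cmp_map_eq i j).trans (hg.cmp_map_eq i j).symm⟩
  -- the back-and-forth construction of `iso_of_countable_dense`, started at `f₀`
  let cofinal : α ⊕ β → Cofinal (PartialIso α β) := fun p =>
    Sum.recOn p (definedAtLeft β) (definedAtRight α)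
  let I := idealOfCofinals f₀ cofinal
  let F a := funOfIdeal a I (cofinal_meets_idealOfCofinals _ cofinal (Sum.inl a))
  let G b := invOfIdeal b I (cofinal_meets_idealOfCofinals _ cofinal (Sum.inr b))
  have compat : ∀ p ∈ I, ∀ q ∈ I, ∀ x ∈ p.val, ∀ y ∈ q.val, cmp x.1 y.1 = cmp x.2 y.2 := by
    intro p hp q hq x hx y hy
    obtain ⟨m, -, hpm, hqm⟩ := I.directed _ hp _ hq
    exact m.prop x (hpm hx) y (hqm hy)
  refine ⟨OrderIso.ofCmpEqCmp (fun a => (F a).val) (fun b => (G b).val) fun a b => ?_, fun i => ?_⟩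
  · obtain ⟨p, hp, ha⟩ := (F a).prop
    obtain ⟨q, hq, hb⟩ := (G b).prop
    exact compat p hp q hq _ ha _ hb
  · obtain ⟨p, hp, hfi⟩ := (F (f i)).prop
    have := compat p hp f₀ (mem_idealOfCofinals _ _) _ hfi (f i, g i)
      (Finset.mem_image_of_mem _ (Finset.mem_univ i))
    exact (cmp_eq_eq_iff _ _).1 (this.symm.trans (cmp_self_eq_eq _))

variable [Countable α] [DenselyOrdered α] [NoMinOrder α] [NoMaxOrder α] [Nonempty α]

theorem exists_strictMonoPerm_image_eq {s t : Finset α} (h : s.card = t.card) :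
    ∃ σ ∈ strictMonoPerms α, s.image σ = t := by
  obtain ⟨e, he⟩ := exists_orderIso_apply_eq (s.orderEmbOfFin rfl).strictMono
    (t.orderEmbOfFin h.symm).strictMono
  refine ⟨e.toEquiv, e.strictMono, Finset.coe_injective ?_⟩
  rw [Finset.coe_image, ← s.range_orderEmbOfFin rfl, ← t.range_orderEmbOfFin h.symm, ← range_comp]
  exact congrArg range (funext he)

theorem exists_strictMonoPerm_apply_eq_apply_eq {a b c d : α} (hab : a < b) (hcd : c < d) :
    ∃ σ ∈ strictMonoPerms α, σ a = c ∧ σ b = d := by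
  have hmono {x y : α} (hxy : x < y) : StrictMono ![x, y] :=
    Fin.strictMono_iff_lt_succ.2 fun i => by fin_cases i; simpa using hxy
  obtain ⟨e, he⟩ := exists_orderIso_apply_eq (hmono hab) (hmono hcd)
  exact ⟨e.toEquiv, e.strictMono, he 0, he 1⟩

end Homogeneity

theorem StrictMono.eqOn_of_finset_image_eq {α β : Type} [LinearOrder α] [LinearOrder β]
    {f g : α → β} (hf : StrictMono f) (hg : StrictMono g) {A : Finset α}
    (h : A.image f = A.image g) : EqOn f g A := by
  have hcard : (A.image g).card = A.card := Finset.card_image_of_injective _ hg.injective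
  have hsort {φ : α → β} (hφ : StrictMono φ) (hφg : A.image φ = A.image g) :
      φ ∘ A.orderEmbOfFin rfl = (A.image g).orderEmbOfFin hcard :=
    Finset.orderEmbOfFin_unique hcard
      (fun i => hφg ▸ Finset.mem_image_of_mem φ (A.orderEmbOfFin_mem rfl i))
      (hφ.comp (A.orderEmbOfFin rfl).strictMono)
  intro a ha
  obtain ⟨i, rfl⟩ : a ∈ range (A.orderEmbOfFin rfl) := by rwa [Finset.range_orderEmbOfFin]
  exact congrFun ((hsort hf h).trans (hsort hg rfl).symm) i

theorem exists_strictMonoPerm_forall_image_color_eq {α κ : Type} [LinearOrder α] [Countable α]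
    [DenselyOrdered α] [NoMinOrder α] [NoMaxOrder α] [Nonempty α] [Finite κ]
    (c : Finset α → κ) {n : ℕ} (𝓕 : Finset (Finset α)) (h𝓕 : ∀ D ∈ 𝓕, D.card = n) :
    ∃ σ ∈ strictMonoPerms α, ∃ k, ∀ D ∈ 𝓕, c (D.image σ) = k := by
  classical
  obtain ⟨C, hC, k, hk⟩ := exists_finset_card_eq_isHomogeneous c n (𝓕.biUnion id).card
  obtain ⟨σ, hσ, hσC⟩ := exists_strictMonoPerm_image_eq hC.symm
  refine ⟨σ, hσ, k, fun D hD => hk _ ?_ ?_⟩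
  · rw [← hσC, Finset.coe_subset]
    exact Finset.image_subset_image (Finset.subset_biUnion_of_mem id hD)
  · rw [Finset.card_image_of_injective _ hσ.injective, h𝓕 D hD]

section PointwiseTopology

variable {α : Type}

attribute [local instance] permPointwiseTopology

theorem isInducing_perm_coe_symm [t : TopologicalSpace α] [DiscreteTopology α] :
    IsInducing fun σ : Perm α => ((⇑σ, ⇑σ.symm) : (α → α) × (α → α)) := by
  constructor
  rw [DiscreteTopology.eq_bot (t := t)]
  rfl

theorem isOpen_setOf_inv_apply_eq (a b : α) : IsOpen {σ : Perm α | σ⁻¹ a = b} := by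
  let _ : TopologicalSpace α := ⊥
  have : DiscreteTopology α := ⟨rfl⟩
  have : Continuous fun σ : Perm α => σ⁻¹ a :=
    (continuous_apply a).comp (continuous_snd.comp isInducing_perm_coe_symm.continuous)
  exact (isOpen_discrete {b}).preimage this

theorem exists_finset_fix_subset_of_mem_nhds_one {S : Set (Perm α)} (hS : S ∈ 𝓝 1) :
    ∃ A : Finset α, {σ : Perm α | ∀ a ∈ A, σ a = a} ⊆ S := by
  classical
  let _ : TopologicalSpace α := ⊥
  have : DiscreteTopology α := ⟨rfl⟩
  rw [isInducing_perm_coe_symm.nhds_eq_comap, nhds_prod_eq, nhds_pi, nhds_pi] at hS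
  obtain ⟨U, hU, hUS⟩ := hS
  obtain ⟨U₁, hU₁, U₂, hU₂, hU₁₂⟩ := mem_prod_iff.1 hU
  obtain ⟨I₁, hI₁, t₁, ht₁, hsub₁⟩ := mem_pi.1 hU₁
  obtain ⟨I₂, hI₂, t₂, ht₂, hsub₂⟩ := mem_pi.1 hU₂
  refine ⟨hI₁.toFinset ∪ hI₂.toFinset, fun σ hσ => hUS (hU₁₂ ⟨hsub₁ fun a ha => ?_,
    hsub₂ fun a ha => ?_⟩)⟩
  · show σ a ∈ t₁ a
    rw [hσ a (by simp [ha])]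
    exact mem_of_mem_nhds (ht₁ a)
  · show σ.symm a ∈ t₂ a
    rw [σ.symm_apply_eq.2 (hσ a (by simp [ha])).symm]
    exact mem_of_mem_nhds (ht₂ a)

theorem exists_finset_forall_fix_smul_mem (H : Subgroup (Perm α)) {X : Type} [UniformSpace X]
    [CompactSpace X] [MulAction H X] [ContinuousSMul H X] {W : SetRel X X} (hW : W ∈ 𝓤 X) :
    ∃ A : Finset α, ∀ h : H, (∀ a ∈ A, (h : Perm α) a = a) → ∀ x : X, (h • x, x) ∈ W := by
  obtain ⟨V, hV, hVW⟩ := isCompact_univ.mem_uniformity_of_prod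
    (f := fun (h : H) (x : X) => h • x) continuous_smul.continuousOn (mem_univ 1) hW
  rw [nhdsWithin_univ, nhds_subtype] at hV
  obtain ⟨S, hS, hSV⟩ := hV
  obtain ⟨A, hA⟩ := exists_finset_fix_subset_of_mem_nhds_one hS
  exact ⟨A, fun h hh x => by simpa using hVW h (hSV (hA hh)) x (mem_univ x)⟩

end PointwiseTopology

theorem exists_forall_smul_eq_of_forall_finset {G X : Type} [SMul G X] [UniformSpace X]
    [CompactSpace X] [T2Space X] [ContinuousConstSMul G X]
    (h : ∀ F : Finset G, ∀ V ∈ 𝓤 X, ∃ x : X, ∀ g ∈ F, (g • x, x) ∈ V) :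
    ∃ x : X, ∀ g : G, g • x = x := by
  classical
  let Z : G × {V : SetRel X X // V ∈ 𝓤 X ∧ IsClosed V} → Set X := fun i =>
    {x | (i.1 • x, x) ∈ i.2.1}
  have hZ i : IsClosed (Z i) :=
    i.2.2.2.preimage ((continuous_const_smul i.1).prodMk continuous_id)
  obtain ⟨x, -, hx⟩ := isCompact_univ.inter_iInter_nonempty Z hZ fun u => by
    obtain ⟨x, hx⟩ := h (u.image Prod.fst) (⋂ i ∈ u, i.2.1)
      ((Filter.biInter_finset_mem u).2 fun i _ => i.2.2.1)
    exact ⟨x, mem_univ x, mem_iInter₂.2 fun i hi =>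
      mem_iInter₂.1 (hx i.1 (Finset.mem_image_of_mem _ hi)) i hi⟩
  exact ⟨x, fun g => eq_of_uniformity_basis uniformity_hasBasis_closed fun hV =>
    mem_iInter.1 hx (g, ⟨_, hV⟩)⟩

section Aut

variable {α X : Type} [LinearOrder α] [MulAction (strictMonoPerms α) X]

theorem inv_smul_mem_of_image_eq {A : Finset α} {W : SetRel X X}
    (hA : ∀ h : strictMonoPerms α, (∀ a ∈ A, (h : Perm α) a = a) → ∀ x : X, (h • x, x) ∈ W)
    {g h : strictMonoPerms α} (hgh : A.image (g : Perm α) = A.image (h : Perm α)) (x : X) :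
    (g⁻¹ • x, h⁻¹ • x) ∈ W := by
  have hfix : ∀ a ∈ A, ((g⁻¹ * h : strictMonoPerms α) : Perm α) a = a := fun a ha => by
    simp [symm_apply_eq, g.2.eqOn_of_finset_image_eq h.2 hgh ha]
  simpa [smul_smul] using hA _ hfix (h⁻¹ • x)

variable [Countable α] [DenselyOrdered α] [NoMinOrder α] [NoMaxOrder α] [Nonempty α]
  [UniformSpace X] [CompactSpace X] [Nonempty X]

theorem exists_forall_smul_near_of_fix {A : Finset α} {W : SetRel X X} (hW : W ∈ 𝓤 X)
    (hA : ∀ h : strictMonoPerms α, (∀ a ∈ A, (h : Perm α) a = a) → ∀ x : X, (h • x, x) ∈ W)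
    (F : Finset (strictMonoPerms α)) :
    ∃ x : X, ∀ g ∈ F, ∃ y, (y, g • x) ∈ W ○ W ∧ (y, x) ∈ W ○ W := by
  classical
  obtain ⟨t, ht⟩ := CompactSpace.elim_nhds_subcover _ fun y => UniformSpace.ball_mem_nhds y hW
  obtain ⟨x₀⟩ := ‹Nonempty X›
  have hcover (x : X) : ∃ y ∈ t, (y, x) ∈ W := by
    obtain ⟨y, hyt, hy⟩ := mem_iUnion₂.1 (ht.ge (mem_univ x))
    exact ⟨y, hyt, hy⟩
  have hcolor (D : Finset α) : ∃ y : t, ∀ h : strictMonoPerms α,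
      A.image (h : Perm α) = D → ((y : X), h⁻¹ • x₀) ∈ W ○ W := by
    by_cases hD : ∃ h₀ : strictMonoPerms α, A.image (h₀ : Perm α) = D
    · obtain ⟨h₀, rfl⟩ := hD
      obtain ⟨y, hyt, hy⟩ := hcover (h₀⁻¹ • x₀)
      exact ⟨⟨y, hyt⟩, fun h hh => ⟨_, hy, inv_smul_mem_of_image_eq hA hh.symm x₀⟩⟩
    · obtain ⟨y, hyt, -⟩ := hcover x₀
      exact ⟨⟨y, hyt⟩, fun h hh => (hD ⟨h, hh⟩).elim⟩
  choose c hc using hcolor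
  obtain ⟨φ, hφ, k, hk⟩ := exists_strictMonoPerm_forall_image_color_eq c
    (insert A (F.image fun g => A.image ((g⁻¹ : strictMonoPerms α) : Perm α))) (n := A.card)
    (by
      simp only [Finset.mem_insert, Finset.mem_image]
      rintro D (rfl | ⟨g, -, rfl⟩)
      exacts [rfl, Finset.card_image_of_injective A (g⁻¹).2.injective])
  let φ' : strictMonoPerms α := ⟨φ, hφ⟩
  refine ⟨φ'⁻¹ • x₀, fun g hg => ⟨k, ?_, ?_⟩⟩
  · have := hc ((A.image ((g⁻¹ : strictMonoPerms α) : Perm α)).image φ) (φ' * g⁻¹)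
      (by rw [Finset.image_image]; rfl)
    rwa [hk _ (Finset.mem_insert_of_mem (Finset.mem_image_of_mem _ hg)), mul_inv_rev, inv_inv,
      ← smul_smul] at this
  · have := hc _ φ' rfl
    rwa [hk A (Finset.mem_insert_self _ _)] at this

end Aut

section LinearOrderCodes

variable {α : Type}

def linearOrderCodes (α : Type) : Set (α → α → Bool) :=
  {r | (∀ a, r a a = false) ∧ (∀ a b c, r a b → r b c → r a c) ∧ ∀ a b, a ≠ b → r a b ∨ r b a}

theorem isClosed_linearOrderCodes : IsClosed (linearOrderCodes α) := by
  have hev (a b : α) : Continuous fun r : α → α → Bool => r a b := by fun_prop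
  have hirr : IsClosed {r : α → α → Bool | ∀ a, r a a = false} := by
    rw [ofPred_forall]
    exact isClosed_iInter fun a => isClosed_eq (hev a a) continuous_const
  have htrans : IsClosed {r : α → α → Bool | ∀ a b c, r a b → r b c → r a c} := by
    simp only [ofPred_forall]
    refine isClosed_iInter fun a => isClosed_iInter fun b => isClosed_iInter fun c => ?_
    exact (isClosed_discrete {v : Bool × Bool × Bool | v.1 → v.2.1 → v.2.2}).preimage
      ((hev a b).prodMk ((hev b c).prodMk (hev a c)))
  have htot : IsClosed {r : α → α → Bool | ∀ a b, a ≠ b → r a b ∨ r b a} := by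
    simp only [ofPred_forall]
    refine isClosed_iInter fun a => isClosed_iInter fun b => isClosed_iInter fun _ => ?_
    exact (isClosed_discrete {v : Bool × Bool | v.1 ∨ v.2}).preimage
      ((hev a b).prodMk (hev b a))
  exact hirr.inter (htrans.inter htot)

instance : CompactSpace (linearOrderCodes α) :=
  isCompact_iff_compactSpace.1 isClosed_linearOrderCodes.isCompact

instance [LinearOrder α] : Nonempty (linearOrderCodes α) :=
  ⟨⟨fun a b => decide (a < b), by simp, fun _ _ _ => by simpa using lt_trans,
    fun _ _ h => by simpa using h.lt_or_gt⟩⟩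

theorem linearOrderCodes_ne_swap {r : α → α → Bool} (hr : r ∈ linearOrderCodes α) {a b : α}
    (hab : a ≠ b) : r a b ≠ r b a := by
  obtain ⟨hirr, htrans, htot⟩ := hr
  intro h
  rcases htot a b hab with hr | hr <;> simpa [hirr] using htrans _ _ _ hr (h ▸ hr :)

instance : MulAction (Perm α) (linearOrderCodes α) where
  smul σ r := ⟨fun a b => r.1 (σ⁻¹ a) (σ⁻¹ b), fun _ => r.2.1 _,
    fun _ _ _ => r.2.2.1 _ _ _, fun _ _ h => r.2.2.2 _ _ (σ⁻¹.injective.ne h)⟩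
  one_smul _ := rfl
  mul_smul _ _ _ := rfl

@[simp]
theorem coe_perm_smul_linearOrderCode (σ : Perm α) (r : linearOrderCodes α) (a b : α) :
    (σ • r).1 a b = r.1 (σ⁻¹ a) (σ⁻¹ b) := rfl

attribute [local instance] permPointwiseTopology

theorem continuousSMul_linearOrderCodes : ContinuousSMul (Perm α) (linearOrderCodes α) := by
  refine ⟨Continuous.subtype_mk (continuous_pi fun a => continuous_pi fun b => ?_) _⟩
  refine continuous_iff_continuousAt.2 fun p₀ => ?_
  have hloc (c : α) : ∀ᶠ p : Perm α × linearOrderCodes α in 𝓝 p₀, p.1⁻¹ c = p₀.1⁻¹ c :=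
    continuous_fst.continuousAt.preimage_mem_nhds ((isOpen_setOf_inv_apply_eq c _).mem_nhds rfl)
  have hev : Continuous fun p : Perm α × linearOrderCodes α => p.2.1 (p₀.1⁻¹ a) (p₀.1⁻¹ b) :=
    (continuous_apply _).comp
      ((continuous_apply _).comp (continuous_subtype_val.comp continuous_snd))
  refine hev.continuousAt.congr ?_
  filter_upwards [hloc a, hloc b] with p ha hb
  simp [ha, hb]

end LinearOrderCodes

section Main

variable {α : Type} [LinearOrder α] [Countable α] [DenselyOrdered α] [NoMinOrder α]
  [NoMaxOrder α] [Nonempty α]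

attribute [local instance] permPointwiseTopology

theorem extremelyAmenable_strictMonoPerms : ExtremelyAmenable (strictMonoPerms α) := by
  intro X _ _ _ _ _ _
  let _ : UniformSpace X := uniformSpaceOfCompactR1
  refine exists_forall_smul_eq_of_forall_finset fun F V hV => ?_
  obtain ⟨W₂, hW₂, hW₂symm, hW₂V⟩ := comp_symm_mem_uniformity_sets hV
  obtain ⟨W, hW, -, hWW₂⟩ := comp_symm_mem_uniformity_sets hW₂
  obtain ⟨A, hA⟩ := exists_finset_forall_fix_smul_mem (strictMonoPerms α) hW
  obtain ⟨x, hx⟩ := exists_forall_smul_near_of_fix hW hA F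
  refine ⟨x, fun g hg => ?_⟩
  obtain ⟨y, hgx, hx⟩ := hx g hg
  exact hW₂V ⟨y, SetRel.symm W₂ (hWW₂ hgx), hWW₂ hx⟩

theorem eq_strictMonoPerms_of_extremelyAmenable {H : Subgroup (Perm α)}
    (hle : strictMonoPerms α ≤ H) (hH : ExtremelyAmenable H) : H = strictMonoPerms α := by
  have := continuousSMul_linearOrderCodes (α := α)
  obtain ⟨r, hr⟩ := hH (linearOrderCodes α)
  have hinv {σ : Perm α} (hσ : σ ∈ H) (a b : α) : r.1 (σ a) (σ b) = r.1 a b := by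
    simpa using (congrFun (congrFun (congrArg Subtype.val (hr ⟨σ, hσ⟩)) (σ a)) (σ b)).symm
  refine le_antisymm (fun σ hσ a b hab => ?_) hle
  by_contra hba
  have hlt : σ b < σ a := (not_lt.1 hba).lt_of_ne (σ.injective.ne hab.ne')
  -- a monotone `τ` sending `(a, b)` to `(σ b, σ a)` shows that `r` cannot tell these pairs apart
  obtain ⟨τ, hτ, hτa, hτb⟩ := exists_strictMonoPerm_apply_eq_apply_eq hab hlt
  refine linearOrderCodes_ne_swap r.2 (σ.injective.ne hab.ne) ?_
  rw [hinv hσ, ← hτa, ← hτb, hinv (hle hτ)]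

end Main

/-- `Aut(ℚ, <)`, the group of strictly increasing permutations of `ℚ`, is extremely
amenable (in the subspace topology inherited from `S∞(ℚ)` with the topology of pointwise
convergence) and is maximally extremely amenable in `S∞(ℚ)`. -/
theorem autQ_maximally_extremelyAmenable :
    ExtremelyAmenable ↥(strictMonoPerms ℚ) ∧
      ∀ H' : Subgroup (Equiv.Perm ℚ), strictMonoPerms ℚ ≤ H' →
        ExtremelyAmenable ↥H' → H' = strictMonoPerms ℚ :=
  ⟨extremelyAmenable_strictMonoPerms, fun _ => eq_strictMonoPerms_of_extremelyAmenable⟩
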